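/- arXiv:2301.01313 — 2 statements merged into one kernel-verified Lean document; each statement's English description precedes it below -/
import Mathlib

section
/- Assume additionally that W is doubly stochastic (so W𝟙 = 𝟙) and that the initial correction has zero column average, C^{(0)}·𝟙 = 0 (as holds, e.g., for the initialization C^{(0)} = G·((1/n)𝟙𝟙ᵀ − I) for any G ∈ ℝ^{d×n}). Then C^{(t)}·𝟙 = 0 for every t ∈ ℕ, and consequently the averaged iterates x̄^{(t)+k} := (1/n)·X^{(t)+k}·𝟙 satisfy x̄^{(t)+k+1} = x̄^{(t)+k} − (η_c/n)·G^{(t),k}·𝟙 for all t and k = 0,…,K−1; that is, the global average performs plain gradient-descent-type steps with the averaged gradient matrices. -/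
open Finset

/-- **Conservation of the correction and SGD behaviour of the average in K-GT.**
If `W` is doubly stochastic and the initial correction has zero column average
(`C^{(0)}𝟙 = 0`), then `C^{(t)}𝟙 = 0` for every `t`, and the averaged iterates
`x̄^{(t)+k} = (1/n)X^{(t)+k}𝟙` satisfy
`x̄^{(t)+k+1} = x̄^{(t)+k} − (η_c/n)·G^{(t),k}𝟙` for all `t` and `k < K`. -/
theorem kgt_average_is_sgd (d n K : ℕ) (hn : 0 < n) (hK : 1 ≤ K)
    (ηc ηs : ℝ) (hηc : 0 < ηc) (hηs : 0 < ηs)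
    (W : Matrix (Fin n) (Fin n) ℝ)
    (hWnonneg : ∀ i j, 0 ≤ W i j)
    (hWrow : ∀ i, ∑ j, W i j = 1)
    (hWcol : ∀ j, ∑ i, W i j = 1)
    (G : ℕ → ℕ → Matrix (Fin d) (Fin n) ℝ)
    (X C : ℕ → Matrix (Fin d) (Fin n) ℝ)
    (Xloc : ℕ → ℕ → Matrix (Fin d) (Fin n) ℝ)
    (hXloc0 : ∀ t, Xloc t 0 = X t)
    (hXlocStep : ∀ t k, k < K → Xloc t (k + 1) = Xloc t k - ηc • (G t k + C t))
    (Z : ℕ → Matrix (Fin d) (Fin n) ℝ)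
    (hZ : ∀ t, Z t = ((K : ℝ) * ηc)⁻¹ • (X t - Xloc t K))
    (hX : ∀ t, X (t + 1) = (X t - ηs • (X t - Xloc t K)) * W)
    (hC : ∀ t, C (t + 1) = C t + Z t * (W - 1))
    (hC0 : (C 0).mulVec (fun _ => (1 : ℝ)) = 0) :
    (∀ t, (C t).mulVec (fun _ => (1 : ℝ)) = 0) ∧
    (∀ t, ∀ k < K,
      (n : ℝ)⁻¹ • (Xloc t (k + 1)).mulVec (fun _ => (1 : ℝ)) =
        (n : ℝ)⁻¹ • (Xloc t k).mulVec (fun _ => (1 : ℝ))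
          - (ηc / n) • (G t k).mulVec (fun _ => (1 : ℝ))) := by
  have hW1 : W.mulVec (fun _ => (1 : ℝ)) = fun _ => (1 : ℝ) := by
    funext i
    simp [Matrix.mulVec, dotProduct, hWrow i]
  have hCall : ∀ t, (C t).mulVec (fun _ => (1 : ℝ)) = 0 := by
    intro t
    induction t with
    | zero => exact hC0
    | succ t ih =>
      rw [hC t, Matrix.add_mulVec, ih, ← Matrix.mulVec_mulVec,
        Matrix.sub_mulVec, hW1, Matrix.one_mulVec, sub_self,
        Matrix.mulVec_zero, zero_add]
  refine ⟨hCall, fun t k hk => ?_⟩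
  rw [hXlocStep t k hk, Matrix.sub_mulVec, Matrix.smul_mulVec,
    Matrix.add_mulVec, hCall t, add_zero, smul_sub, smul_smul]
  ring_nf
end

section
/- If the local stepsize satisfies η_c ≤ 1/(8·K·L), then the accumulated client drift is bounded as Ɛ_t ≤ 3·K·Ξ_t + 12·K³·η_c²·L²·γ_t + 6·K³·η_c²·‖∇f(x̄^{(t)})‖² + 3·K²·η_c²·σ². -/
set_option maxHeartbeats 10000000

open MeasureTheory Finset ENNReal

open scoped RealInnerProductSpace

lemma factor_aux {ι : Type*} [Fintype ι] [DecidableEq ι] {Ω₀ : Type*} [MeasurableSpace Ω₀]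
    (μ₀ : Measure Ω₀) [IsProbabilityMeasure μ₀] (p : ι)
    (F : (ι → Ω₀) → Ω₀ → ℝ≥0∞)
    (hF : Measurable fun q : (ι → Ω₀) × Ω₀ => F q.1 q.2)
    (hdep : ∀ ω z, F (Function.update ω p z) = F ω) :
    ∫⁻ ω, F ω (ω p) ∂(Measure.pi fun _ => μ₀)
      = ∫⁻ ω, ∫⁻ z, F ω z ∂μ₀ ∂(Measure.pi fun _ => μ₀) := by
  classical
  set e1 := MeasurableEquiv.piEquivPiSubtypeProd (fun _ : ι => Ω₀) (fun q => q = p) with he1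
  have hmp := (measurePreserving_piEquivPiSubtypeProd (fun _ : ι => μ₀) (fun q => q = p)).symm
  have heU : ∀ (z : Ω₀) (b : {q // ¬ q = p} → Ω₀),
      e1.symm (fun _ => z, b) = Function.update (e1.symm (fun _ => z, b)) p z := by
    intro z b
    funext q
    by_cases h : q = p
    · subst h
      simp [e1, MeasurableEquiv.piEquivPiSubtypeProd, Equiv.piEquivPiSubtypeProd,
        Function.update_self]
    · simp [Function.update_of_ne h]
  have hswap : ∀ (z z' : Ω₀) (b : {q // ¬ q = p} → Ω₀),
      F (e1.symm (fun _ => z, b)) = F (e1.symm (fun _ => z', b)) := by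
    intro z z' b
    have h1 : e1.symm (fun _ => z, b) = Function.update (e1.symm (fun _ => z', b)) p z := by
      rw [heU z b, heU z' b]
      funext q
      by_cases h : q = p
      · subst h; simp
      · simp only [Function.update_of_ne h]
        simp [e1, MeasurableEquiv.piEquivPiSubtypeProd, Equiv.piEquivPiSubtypeProd, h]
    rw [h1, hdep]
  have hat : ∀ (z : Ω₀) (b : {q // ¬ q = p} → Ω₀), e1.symm (fun _ => z, b) p = z := by
    intro z b
    conv_lhs => rw [heU z b]
    simp
  -- measurability facts
  have hg : Measurable fun ω : ι → Ω₀ => F ω (ω p) :=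
    hF.comp (measurable_id.prodMk (measurable_pi_apply p))
  have hg2 : Measurable fun ω : ι → Ω₀ => ∫⁻ z, F ω z ∂μ₀ :=
    Measurable.lintegral_prod_right hF
  have hcst : ∀ (b : {q // ¬ q = p} → Ω₀),
      Measurable fun z : Ω₀ => e1.symm (fun _ => z, b) := by
    intro b
    exact e1.symm.measurable.comp ((measurable_pi_lambda _ fun _ => measurable_id).prodMk
      measurable_const)
  -- transport both sides to the product space
  have hLHS : ∫⁻ ω, F ω (ω p) ∂(Measure.pi fun _ => μ₀)
      = ∫⁻ b, ∫⁻ z, F (e1.symm (fun _ => z, b)) z ∂μ₀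
          ∂(Measure.pi fun _ : {q // ¬ q = p} => μ₀) := by
    rw [← hmp.lintegral_comp hg]
    rw [lintegral_prod_symm (fun a => F (e1.symm a) (e1.symm a p))
      ((hg.comp e1.symm.measurable).aemeasurable)]
    refine lintegral_congr fun b => ?_
    have hm1 : Measurable fun z : Ω₀ =>
        ((e1.symm (fun _ => z, b) : ι → Ω₀), e1.symm (fun _ => z, b) p) :=
      (hcst b).prodMk ((measurable_pi_apply p).comp (hcst b))
    have key := (measurePreserving_funUnique μ₀ {q : ι // q = p}).lintegral_comp
      (f := fun z => F (e1.symm (fun _ => z, b)) (e1.symm (fun _ => z, b) p))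
      (hF.comp hm1)
    have harg : ∀ a : {q : ι // q = p} → Ω₀,
        (fun _ : {q : ι // q = p} => (MeasurableEquiv.funUnique {q : ι // q = p} Ω₀) a) = a := by
      intro a; funext u
      exact congrArg a (Unique.eq_default u).symm
    simp_rw [harg] at key
    have hfin : (Unique.fintype : Fintype {q : ι // q = p}) = Subtype.fintype fun q => q = p :=
      Subsingleton.elim _ _
    rw [hfin] at key
    exact key.trans (lintegral_congr fun z => by rw [hat])
  have hRHS : ∫⁻ ω, ∫⁻ z, F ω z ∂μ₀ ∂(Measure.pi fun _ => μ₀)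
      = ∫⁻ b, ∫⁻ z, F (e1.symm (fun _ => z, b)) z ∂μ₀
          ∂(Measure.pi fun _ : {q // ¬ q = p} => μ₀) := by
    rw [← hmp.lintegral_comp hg2]
    rw [lintegral_prod_symm (fun a => ∫⁻ z, F (e1.symm a) z ∂μ₀)
      ((hg2.comp e1.symm.measurable).aemeasurable)]
    refine lintegral_congr fun b => ?_
    have hm2 : Measurable fun q : Ω₀ × Ω₀ => F (e1.symm (fun _ => q.1, b)) q.2 :=
      hF.comp (((hcst b).comp measurable_fst).prodMk measurable_snd)
    have key := (measurePreserving_funUnique μ₀ {q : ι // q = p}).lintegral_comp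
      (f := fun z' => ∫⁻ z, F (e1.symm (fun _ => z', b)) z ∂μ₀)
      (Measurable.lintegral_prod_right hm2)
    have harg : ∀ a : {q : ι // q = p} → Ω₀,
        (fun _ : {q : ι // q = p} => (MeasurableEquiv.funUnique {q : ι // q = p} Ω₀) a) = a := by
      intro a; funext u
      exact congrArg a (Unique.eq_default u).symm
    simp_rw [harg] at key
    have hfin : (Unique.fintype : Fintype {q : ι // q = p}) = Subtype.fintype fun q => q = p :=
      Subsingleton.elim _ _
    rw [hfin] at key
    refine key.trans ?_
    have hcz : ∀ z' : Ω₀, ∫⁻ z, F (e1.symm (fun _ => z', b)) z ∂μ₀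
        = ∫⁻ z, F (e1.symm (fun _ => z, b)) z ∂μ₀ :=
      fun z' => lintegral_congr fun z => by rw [hswap z' z b]
    rw [lintegral_congr hcz, lintegral_const, measure_univ, mul_one]
  rw [hLHS, hRHS]
lemma moment_split {d : ℕ} {Ω₀ : Type} [MeasurableSpace Ω₀] (μ₀ : Measure Ω₀)
    [IsProbabilityMeasure μ₀] (N : Ω₀ → EuclideanSpace ℝ (Fin d)) (hN : Measurable N)
    (hNmean : ∫ z, N z ∂μ₀ = 0) (w : EuclideanSpace ℝ (Fin d)) (η : ℝ)
    (hfin : ∫⁻ z, ENNReal.ofReal (‖N z‖ ^ 2) ∂μ₀ ≠ ⊤) :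
    ∫⁻ z, ENNReal.ofReal (‖w - η • N z‖ ^ 2) ∂μ₀
      = ENNReal.ofReal (‖w‖ ^ 2)
        + ENNReal.ofReal (η ^ 2) * ∫⁻ z, ENNReal.ofReal (‖N z‖ ^ 2) ∂μ₀ := by
  have hsq_meas : Measurable fun z => ‖N z‖ ^ 2 := hN.norm.pow_const 2
  have hsq_int : Integrable (fun z => ‖N z‖ ^ 2) μ₀ := by
    refine ⟨hsq_meas.aestronglyMeasurable, ?_⟩
    rw [hasFiniteIntegral_iff_ofReal (Filter.Eventually.of_forall fun z => by positivity)]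
    exact hfin.lt_top
  have hN2 : MemLp N 2 μ₀ := by
    rw [memLp_two_iff_integrable_sq_norm hN.aestronglyMeasurable]
    exact hsq_int
  have hNint : Integrable N μ₀ := hN2.integrable (by norm_num)
  have hinner_int : Integrable (fun z => ⟪w, N z⟫) μ₀ := hNint.const_inner w
  have expand : ∀ z, ‖w - η • N z‖ ^ 2
      = ‖w‖ ^ 2 - 2 * (η * ⟪w, N z⟫) + η ^ 2 * ‖N z‖ ^ 2 := by
    intro z
    rw [norm_sub_sq_real, real_inner_smul_right, norm_smul]
    simp [mul_pow, sq_abs]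
  have hfull_int : Integrable (fun z => ‖w - η • N z‖ ^ 2) μ₀ := by
    have h : (fun z => ‖w - η • N z‖ ^ 2)
        = fun z => ‖w‖ ^ 2 - 2 * (η * ⟪w, N z⟫) + η ^ 2 * ‖N z‖ ^ 2 := funext expand
    rw [h]
    exact ((integrable_const _).sub (((hinner_int.const_mul η).const_mul 2))).add
      (hsq_int.const_mul _)
  have hI : ∫ z, ‖w - η • N z‖ ^ 2 ∂μ₀ = ‖w‖ ^ 2 + η ^ 2 * ∫ z, ‖N z‖ ^ 2 ∂μ₀ := by
    simp_rw [expand]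
    have hf1 : Integrable (fun z => ‖w‖ ^ 2 - 2 * (η * ⟪w, N z⟫)) μ₀ :=
      (integrable_const _).sub ((hinner_int.const_mul η).const_mul 2)
    have hg1 : Integrable (fun z => η ^ 2 * ‖N z‖ ^ 2) μ₀ := hsq_int.const_mul _
    rw [integral_add hf1 hg1,
      integral_sub (integrable_const _) ((hinner_int.const_mul η).const_mul 2),
      integral_const, integral_const_mul, integral_const_mul, integral_inner hNint,
      hNmean, integral_const_mul]
    simp
  have h1 := ofReal_integral_eq_lintegral_ofReal hfull_int
    (Filter.Eventually.of_forall fun z => by positivity)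
  have h2 := ofReal_integral_eq_lintegral_ofReal hsq_int
    (Filter.Eventually.of_forall fun z => by positivity)
  rw [← h1, ← h2, hI, ENNReal.ofReal_add (by positivity)
    (by positivity), ENNReal.ofReal_mul (by positivity)]
lemma sq_integrable_of_lintegral_ne_top {Ω₀ : Type} [MeasurableSpace Ω₀] {μ₀ : Measure Ω₀}
    {f : Ω₀ → ℝ} (hf : Measurable f) (h0 : ∀ z, 0 ≤ f z)
    (hfin : ∫⁻ z, ENNReal.ofReal (f z) ∂μ₀ ≠ ⊤) : Integrable f μ₀ := by
  refine ⟨hf.aestronglyMeasurable, ?_⟩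
  rw [hasFiniteIntegral_iff_ofReal (Filter.Eventually.of_forall h0)]
  exact hfin.lt_top

lemma node_bound
    {d : ℕ} {ι : Type} [Fintype ι] [DecidableEq ι] {Ω₀ : Type} [MeasurableSpace Ω₀]
    (μ₀ : Measure Ω₀) [IsProbabilityMeasure μ₀]
    (K : ℕ) (hK2 : 2 ≤ K) (pt : Fin K → ι) (hpt : Function.Injective pt)
    (L σ ηc : ℝ) (hL : 0 < L) (hσ : 0 ≤ σ) (hηc : 0 < ηc)
    (g : EuclideanSpace ℝ (Fin d) → EuclideanSpace ℝ (Fin d))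
    (hlip : ∀ x y, ‖g x - g y‖ ≤ L * ‖x - y‖)
    (G1 : EuclideanSpace ℝ (Fin d) → Ω₀ → EuclideanSpace ℝ (Fin d))
    (hGmeas : Measurable (Function.uncurry G1))
    (hGmean : ∀ x, ∫ z, G1 x z ∂μ₀ = g x)
    (hGvar : ∀ x, ∫ z, ‖G1 x z - g x‖ ^ 2 ∂μ₀ ≤ σ ^ 2)
    (cc x0 xbar : EuclideanSpace ℝ (Fin d))
    (X : ℕ → (ι → Ω₀) → EuclideanSpace ℝ (Fin d))
    (hX0 : ∀ ω, X 0 ω = x0)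
    (hXstep : ∀ (k : Fin K) ω,
      X ((k : ℕ) + 1) ω = X (k : ℕ) ω - ηc • (G1 (X (k : ℕ) ω) (ω (pt k)) + cc))
    (hstep : ηc ≤ 1 / (8 * K * L)) :
    ∑ k ∈ Finset.range K, ∫ ω, ‖X k ω - xbar‖ ^ 2 ∂(Measure.pi fun _ : ι => μ₀)
      ≤ 3 * K * ‖x0 - xbar‖ ^ 2 + 3 * K ^ 3 * ηc ^ 2 * ‖cc + g xbar‖ ^ 2
        + (3 / 2) * K ^ 2 * ηc ^ 2 * σ ^ 2 := by
  classical
  have hK : 0 < K := by omega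
  obtain ⟨Kr, hKrdef⟩ : ∃ x : ℝ, x = (K : ℝ) := ⟨_, rfl⟩
  have hKr2 : (2 : ℝ) ≤ Kr := by rw [hKrdef]; exact_mod_cast hK2
  have hKr1 : (0 : ℝ) < Kr - 1 := by linarith
  have hKr0 : (0 : ℝ) < Kr := by linarith
  rw [← hKrdef] at hstep
  obtain ⟨A, hAdef⟩ : ∃ x : ℝ, x = ‖cc + g xbar‖ := ⟨_, rfl⟩
  have hA0 : 0 ≤ A := hAdef ▸ norm_nonneg _
  obtain ⟨ρ, hρdef⟩ : ∃ x : ℝ, x = Kr / (Kr - 1) + 2 * L ^ 2 * ηc ^ 2 * Kr := ⟨_, rfl⟩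
  obtain ⟨Ci, hCidef⟩ : ∃ x : ℝ, x = 2 * Kr * ηc ^ 2 * A ^ 2 + ηc ^ 2 * σ ^ 2 := ⟨_, rfl⟩
  have hCi0 : 0 ≤ Ci := by rw [hCidef]; positivity
  -- step size facts
  have hηL : ηc * L ≤ 1 / (8 * Kr) := by
    have h1 : ηc * L ≤ (1 / (8 * Kr * L)) * L := mul_le_mul_of_nonneg_right hstep hL.le
    have h2 : (1 / (8 * Kr * L)) * L = 1 / (8 * Kr) := by
      field_simp
    linarith
  have hηL8 : ηc * L ≤ 1 / 8 := by
    have : 1 / (8 * Kr) ≤ 1 / 8 := by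
      apply one_div_le_one_div_of_le <;> nlinarith
    linarith
  -- ρ facts
  have hρeq : ρ = 1 + 1 / (Kr - 1) + 2 * L ^ 2 * ηc ^ 2 * Kr := by
    rw [hρdef]
    field_simp
    ring
  have hρ2 : 2 * L ^ 2 * ηc ^ 2 * Kr ≤ 1 / (32 * Kr) := by
    have hm : ηc * L * (ηc * L) ≤ (1 / (8 * Kr)) * (1 / (8 * Kr)) :=
      mul_le_mul hηL hηL (by positivity) (by positivity)
    have he : (1 / (8 * Kr)) * (1 / (8 * Kr)) = 1 / (64 * Kr ^ 2) := by
      field_simp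
      ring
    have hm2 : ηc ^ 2 * L ^ 2 * (64 * Kr ^ 2) ≤ 1 := by
      rw [← le_div_iff₀ (by positivity)]
      calc ηc ^ 2 * L ^ 2 = ηc * L * (ηc * L) := by ring
        _ ≤ 1 / (64 * Kr ^ 2) := by rw [← he]; exact hm
    rw [le_div_iff₀ (show (0:ℝ) < 32 * Kr by positivity)]
    calc 2 * L ^ 2 * ηc ^ 2 * Kr * (32 * Kr) = ηc ^ 2 * L ^ 2 * (64 * Kr ^ 2) := by ring
      _ ≤ 1 := hm2
  have hρub : ρ ≤ 1 + (33 / 32) / (Kr - 1) := by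
    have h3 : 1 / (32 * Kr) ≤ (1 / 32) / (Kr - 1) := by
      rw [div_le_div_iff₀ (by positivity) hKr1]
      nlinarith
    have h4 : (33 / 32) / (Kr - 1) = 1 / (Kr - 1) + (1 / 32) / (Kr - 1) := by ring
    linarith [hρeq.le, hρ2]
  have hρ1 : 1 ≤ ρ := by
    rw [hρeq]
    have h5 : 0 < 1 / (Kr - 1) := by positivity
    have h6 : 0 ≤ 2 * L ^ 2 * ηc ^ 2 * Kr := by positivity
    linarith
  have hρ0 : 0 ≤ ρ := by linarith
  have hexp3 : Real.exp (33 / 32) ≤ 3 := by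
    have ha : Real.exp (33 / 32 : ℝ) = Real.exp 1 * Real.exp (1 / 32) := by
      rw [← Real.exp_add]; norm_num
    have hb : Real.exp 1 < 2.7182818286 := Real.exp_one_lt_d9
    have hc : Real.exp (1 / 32 : ℝ) ≤ 32 / 31 := by
      have h := Real.add_one_le_exp (-(1 / 32) : ℝ)
      rw [Real.exp_neg] at h
      have hp : 0 < Real.exp (1 / 32 : ℝ) := Real.exp_pos _
      have h2 := mul_le_mul_of_nonneg_left h hp.le
      rw [mul_inv_cancel₀ hp.ne'] at h2
      linarith
    have hd : Real.exp 1 * Real.exp (1 / 32) ≤ 2.7182818286 * (32 / 31) :=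
      mul_le_mul hb.le hc (Real.exp_pos _).le (by norm_num)
    rw [ha]
    calc Real.exp 1 * Real.exp (1 / 32) ≤ 2.7182818286 * (32 / 31) := hd
      _ ≤ 3 := by norm_num
  have hρpow : ∀ j : ℕ, j ≤ K - 1 → ρ ^ j ≤ 3 := by
    intro j hj
    have h1 : ρ ^ j ≤ ρ ^ (K - 1) := pow_le_pow_right₀ hρ1 hj
    have h2 : ρ ^ (K - 1) ≤ (1 + (33 / 32) / (Kr - 1)) ^ (K - 1) :=
      pow_le_pow_left₀ hρ0 hρub _
    have h3 : (1 + (33 / 32) / (Kr - 1)) ^ (K - 1)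
        ≤ Real.exp ((33 / 32) / (Kr - 1)) ^ (K - 1) :=
      pow_le_pow_left₀ (by positivity) (by linarith [Real.add_one_le_exp ((33 / 32) / (Kr - 1))]) _
    have hcast : ((K - 1 : ℕ) : ℝ) = Kr - 1 := by
      rw [Nat.cast_sub hK, hKrdef]
      simp
    have h4 : Real.exp ((33 / 32) / (Kr - 1)) ^ (K - 1) = Real.exp (33 / 32) := by
      rw [← Real.exp_nat_mul, hcast]
      congr 1
      field_simp
    linarith
  -- measurability and dependence of X
  have hXmeas : ∀ k, k ≤ K → Measurable (X k) := by
    intro k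
    induction k with
    | zero =>
      intro _
      have h : X 0 = fun _ => x0 := funext hX0
      rw [h]; exact measurable_const
    | succ k ih =>
      intro hk
      have hkK : k < K := hk
      have hfe : X (k + 1) = fun ω =>
          X k ω - ηc • (G1 (X k ω) (ω (pt ⟨k, hkK⟩)) + cc) :=
        funext fun ω => hXstep ⟨k, hkK⟩ ω
      rw [hfe]
      have h1 : Measurable fun ω : ι → Ω₀ => G1 (X k ω) (ω (pt ⟨k, hkK⟩)) :=
        hGmeas.comp ((ih hkK.le).prodMk (measurable_pi_apply _))
      exact (ih hkK.le).sub ((h1.add measurable_const).const_smul ηc)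
  have hXdep : ∀ k, k ≤ K → ∀ ω ω', (∀ j : Fin K, (j : ℕ) < k → ω (pt j) = ω' (pt j)) →
      X k ω = X k ω' := by
    intro k
    induction k with
    | zero => intro _ ω ω' _; rw [hX0, hX0]
    | succ k ih =>
      intro hk ω ω' hagree
      have hkK : k < K := hk
      have hXk : X k ω = X k ω' := ih hkK.le ω ω' fun j hj => hagree j (by omega)
      have e1 : X (k + 1) ω = X k ω - ηc • (G1 (X k ω) (ω (pt ⟨k, hkK⟩)) + cc) :=
        hXstep ⟨k, hkK⟩ ω
      have e2 : X (k + 1) ω' = X k ω' - ηc • (G1 (X k ω') (ω' (pt ⟨k, hkK⟩)) + cc) :=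
        hXstep ⟨k, hkK⟩ ω'
      rw [e1, e2, hXk, hagree ⟨k, hkK⟩ (by simp)]
  -- conditional quantities
  obtain ⟨V, hVdef⟩ : ∃ V : EuclideanSpace ℝ (Fin d) → ℝ≥0∞,
      V = fun x => ∫⁻ z, ENNReal.ofReal (‖G1 x z - g x‖ ^ 2) ∂μ₀ := ⟨_, rfl⟩
  obtain ⟨w, hwdef⟩ : ∃ w : EuclideanSpace ℝ (Fin d) → EuclideanSpace ℝ (Fin d),
      w = fun x => x - ηc • (g x + cc) - xbar := ⟨_, rfl⟩
  obtain ⟨cnd, hcnddef⟩ : ∃ c' : EuclideanSpace ℝ (Fin d) → ℝ≥0∞,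
      c' = fun x => ∫⁻ z, ENNReal.ofReal (‖x - ηc • (G1 x z + cc) - xbar‖ ^ 2) ∂μ₀ := ⟨_, rfl⟩
  obtain ⟨EE, hEEdef⟩ : ∃ E' : ℕ → ℝ≥0∞,
      E' = fun k => ∫⁻ ω, ENNReal.ofReal (‖X k ω - xbar‖ ^ 2)
        ∂(Measure.pi fun _ : ι => μ₀) := ⟨_, rfl⟩
  have hvec : ∀ (x : EuclideanSpace ℝ (Fin d)) z,
      x - ηc • (G1 x z + cc) - xbar = w x - ηc • (G1 x z - g x) := by
    intro x z
    rw [hwdef]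
    simp only [smul_add, smul_sub]
    abel
  -- measurability of integrands
  have hFq : Measurable fun q : EuclideanSpace ℝ (Fin d) × Ω₀ =>
      ENNReal.ofReal (‖q.1 - ηc • (G1 q.1 q.2 + cc) - xbar‖ ^ 2) := by
    have h1 : Measurable fun q : EuclideanSpace ℝ (Fin d) × Ω₀ =>
        q.1 - ηc • (G1 q.1 q.2 + cc) - xbar :=
      (measurable_fst.sub ((hGmeas.add measurable_const).const_smul ηc)).sub measurable_const
    exact (h1.norm.pow_const 2).ennreal_ofReal
  have hcndmeas : Measurable cnd := by
    rw [hcnddef]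
    exact Measurable.lintegral_prod_right' hFq
  have hXnmeas : ∀ k, k ≤ K → Measurable fun ω : ι → Ω₀ =>
      ENNReal.ofReal (‖X k ω - xbar‖ ^ 2) := by
    intro k hk
    exact (((hXmeas k hk).sub measurable_const).norm.pow_const 2).ennreal_ofReal
  -- key conditioning identity
  have hEkey : ∀ k, k < K → EE (k + 1)
      = ∫⁻ ω, cnd (X k ω) ∂(Measure.pi fun _ : ι => μ₀) := by
    intro k hk
    have hx1 : ∀ ω, X (k + 1) ω = X k ω - ηc • (G1 (X k ω) (ω (pt ⟨k, hk⟩)) + cc) :=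
      fun ω => hXstep ⟨k, hk⟩ ω
    have h1 : EE (k + 1) = ∫⁻ ω, ENNReal.ofReal
        (‖X k ω - ηc • (G1 (X k ω) (ω (pt ⟨k, hk⟩)) + cc) - xbar‖ ^ 2)
        ∂(Measure.pi fun _ : ι => μ₀) := by
      rw [hEEdef]
      exact lintegral_congr fun ω => by rw [hx1 ω]
    rw [h1]
    have hXk1 : Measurable fun q : (ι → Ω₀) × Ω₀ => X k q.1 :=
      (hXmeas k hk.le).comp measurable_fst
    have hFk : Measurable fun q : (ι → Ω₀) × Ω₀ =>
        ENNReal.ofReal (‖X k q.1 - ηc • (G1 (X k q.1) q.2 + cc) - xbar‖ ^ 2) := by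
      have h2 : Measurable fun q : (ι → Ω₀) × Ω₀ =>
          X k q.1 - ηc • (G1 (X k q.1) q.2 + cc) - xbar :=
        (hXk1.sub (((hGmeas.comp (hXk1.prodMk measurable_snd)).add
          measurable_const).const_smul ηc)).sub measurable_const
      exact (h2.norm.pow_const 2).ennreal_ofReal
    have hfac := factor_aux μ₀ (pt ⟨k, hk⟩)
      (fun ω z => ENNReal.ofReal (‖X k ω - ηc • (G1 (X k ω) z + cc) - xbar‖ ^ 2))
      hFk
      (by
        intro ω z
        have hXeq : X k (Function.update ω (pt ⟨k, hk⟩) z) = X k ω := by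
          refine hXdep k hk.le _ _ fun j hj => ?_
          refine Function.update_of_ne (fun hcon => ?_) _ _
          have : j = ⟨k, hk⟩ := hpt hcon
          rw [this] at hj
          simp at hj
        simp only [hXeq])
    rw [hfac, hcnddef]
  -- real pointwise inequalities
  have hqb : ∀ x : EuclideanSpace ℝ (Fin d), ‖g x + cc‖ ≤ L * ‖x - xbar‖ + A := by
    intro x
    have h1 : ‖g x + cc‖ ≤ ‖g x - g xbar‖ + ‖cc + g xbar‖ := by
      have h : g x + cc = (g x - g xbar) + (cc + g xbar) := by abel
      rw [h]; exact norm_add_le _ _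
    have h2 := hlip x xbar
    rw [← hAdef] at h1
    linarith
  have hwup : ∀ x : EuclideanSpace ℝ (Fin d),
      ‖w x‖ ^ 2 ≤ ρ * ‖x - xbar‖ ^ 2 + 2 * Kr * ηc ^ 2 * A ^ 2 := by
    intro x
    have hs0 : (0:ℝ) ≤ ‖x - xbar‖ := norm_nonneg _
    have hq0 : (0:ℝ) ≤ ‖g x + cc‖ := norm_nonneg _
    have hw1 : ‖w x‖ ≤ ‖x - xbar‖ + ηc * ‖g x + cc‖ := by
      rw [hwdef]
      have h : x - ηc • (g x + cc) - xbar = (x - xbar) - ηc • (g x + cc) := by abel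
      simp only [h]
      calc ‖(x - xbar) - ηc • (g x + cc)‖ ≤ ‖x - xbar‖ + ‖ηc • (g x + cc)‖ := norm_sub_le _ _
        _ = ‖x - xbar‖ + ηc * ‖g x + cc‖ := by
            rw [norm_smul, Real.norm_eq_abs, abs_of_pos hηc]
    have h1 : ‖w x‖ ^ 2 ≤ (‖x - xbar‖ + ηc * ‖g x + cc‖) ^ 2 :=
      pow_le_pow_left₀ (norm_nonneg _) hw1 2
    have h2 : (Kr - 1) * (‖x - xbar‖ + ηc * ‖g x + cc‖) ^ 2
        ≤ Kr * ‖x - xbar‖ ^ 2 + Kr * (Kr - 1) * (ηc * ‖g x + cc‖) ^ 2 := by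
      nlinarith [sq_nonneg (‖x - xbar‖ - (Kr - 1) * (ηc * ‖g x + cc‖))]
    have h3 : ‖g x + cc‖ ^ 2 ≤ 2 * L ^ 2 * ‖x - xbar‖ ^ 2 + 2 * A ^ 2 := by
      nlinarith [sq_nonneg (L * ‖x - xbar‖ - A), hqb x, hq0, mul_nonneg hL.le hs0]
    have h5 : (0:ℝ) ≤ Kr * (Kr - 1) * ηc ^ 2 := by positivity
    have hr2 : (Kr - 1) * (ρ * ‖x - xbar‖ ^ 2 + 2 * Kr * ηc ^ 2 * A ^ 2)
        = Kr * ‖x - xbar‖ ^ 2 + 2 * L ^ 2 * ηc ^ 2 * Kr * (Kr - 1) * ‖x - xbar‖ ^ 2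
          + 2 * Kr * (Kr - 1) * ηc ^ 2 * A ^ 2 := by
      rw [hρdef]; field_simp
    have s1 := mul_le_mul_of_nonneg_left h1 hKr1.le
    have s3 := mul_le_mul_of_nonneg_left h3 h5
    have h4 : (Kr - 1) * ‖w x‖ ^ 2
        ≤ (Kr - 1) * (ρ * ‖x - xbar‖ ^ 2 + 2 * Kr * ηc ^ 2 * A ^ 2) := by
      rw [hr2]; nlinarith [s1, h2, s3]
    exact le_of_mul_le_mul_left h4 hKr1
  have hwlo : ∀ x : EuclideanSpace ℝ (Fin d),
      ‖x - xbar‖ ^ 2 / 4 ≤ ‖w x‖ ^ 2 + ηc ^ 2 * A ^ 2 := by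
    intro x
    have hs0 : (0:ℝ) ≤ ‖x - xbar‖ := norm_nonneg _
    have hv0 : (0:ℝ) ≤ ‖w x‖ := norm_nonneg _
    have hh0 : (0:ℝ) ≤ ηc * A := mul_nonneg hηc.le hA0
    have hw2 : ‖x - xbar‖ - ηc * ‖g x + cc‖ ≤ ‖w x‖ := by
      rw [hwdef]
      have h : x - ηc • (g x + cc) - xbar = (x - xbar) - ηc • (g x + cc) := by abel
      simp only [h]
      have h6 := norm_sub_norm_le (x - xbar) (ηc • (g x + cc))
      rw [norm_smul, Real.norm_eq_abs, abs_of_pos hηc] at h6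
      linarith
    have hηs : ηc * (L * ‖x - xbar‖) ≤ (1/8) * ‖x - xbar‖ := by
      have h7 := mul_le_mul_of_nonneg_right hηL8 hs0
      nlinarith [h7]
    have hv : (7/8) * ‖x - xbar‖ - ηc * A ≤ ‖w x‖ := by
      have h8 := mul_le_mul_of_nonneg_left (hqb x) hηc.le
      linarith
    have hv2 : ‖x - xbar‖ ≤ (8/7) * (‖w x‖ + ηc * A) := by linarith
    nlinarith [hv2, sq_nonneg (‖w x‖ - ηc * A), sq_nonneg ((8/7) * (‖w x‖ + ηc * A) - ‖x - xbar‖),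
      mul_nonneg hs0 (by linarith : (0:ℝ) ≤ ‖w x‖ + ηc * A)]
  -- dichotomy for the conditional second moment
  have hdich : ∀ x : EuclideanSpace ℝ (Fin d), cnd x = ⊤ ∨
      (ENNReal.ofReal (‖w x‖ ^ 2) ≤ cnd x ∧
        cnd x ≤ ENNReal.ofReal (‖w x‖ ^ 2 + ηc ^ 2 * σ ^ 2)) := by
    intro x
    have hNmeas : Measurable fun z => G1 x z - g x :=
      (hGmeas.comp (measurable_const.prodMk measurable_id)).sub measurable_const
    have hNsqmeas : Measurable fun z => ENNReal.ofReal (‖G1 x z - g x‖ ^ 2) :=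
      (hNmeas.norm.pow_const 2).ennreal_ofReal
    have hcndrw : cnd x = ∫⁻ z, ENNReal.ofReal (‖w x - ηc • (G1 x z - g x)‖ ^ 2) ∂μ₀ := by
      simp only [hcnddef]
      exact lintegral_congr fun z => by rw [hvec x z]
    by_cases hVx : V x = ⊤
    · left
      have hpw : ∀ z, ENNReal.ofReal (ηc ^ 2 / 2 * ‖G1 x z - g x‖ ^ 2)
          ≤ ENNReal.ofReal (‖w x - ηc • (G1 x z - g x)‖ ^ 2)
            + ENNReal.ofReal (‖w x‖ ^ 2) := by
        intro z
        rw [← ENNReal.ofReal_add (by positivity) (by positivity)]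
        apply ENNReal.ofReal_le_ofReal
        have h2 : ‖ηc • (G1 x z - g x)‖ = ηc * ‖G1 x z - g x‖ := by
          rw [norm_smul, Real.norm_eq_abs, abs_of_pos hηc]
        have h3 : ‖ηc • (G1 x z - g x)‖ ≤ ‖w x‖ + ‖w x - ηc • (G1 x z - g x)‖ := by
          have h5 : ‖ηc • (G1 x z - g x)‖ = ‖w x - (w x - ηc • (G1 x z - g x))‖ := by
            congr 1; abel
          rw [h5]; exact norm_sub_le _ _
        rw [h2] at h3
        have h6 : (ηc * ‖G1 x z - g x‖) * (ηc * ‖G1 x z - g x‖)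
            ≤ (‖w x‖ + ‖w x - ηc • (G1 x z - g x)‖) * (‖w x‖ + ‖w x - ηc • (G1 x z - g x)‖) :=
          mul_le_mul h3 h3 (mul_nonneg hηc.le (norm_nonneg _)) (by positivity)
        nlinarith [h6, sq_nonneg (‖w x - ηc • (G1 x z - g x)‖ - ‖w x‖)]
      have hint := lintegral_mono (μ := μ₀) hpw
      rw [lintegral_add_right _ measurable_const, lintegral_const, measure_univ, mul_one] at hint
      have hlhs : ∫⁻ z, ENNReal.ofReal (ηc ^ 2 / 2 * ‖G1 x z - g x‖ ^ 2) ∂μ₀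
          = ENNReal.ofReal (ηc ^ 2 / 2) * V x := by
        simp only [hVdef]
        rw [← lintegral_const_mul _ hNsqmeas]
        exact lintegral_congr fun z => by rw [← ENNReal.ofReal_mul (by positivity)]
      rw [hlhs, hVx, ENNReal.mul_top
        (ne_of_gt (ENNReal.ofReal_pos.mpr (by positivity)))] at hint
      rw [hcndrw]
      by_contra hne
      exact (ENNReal.add_ne_top.mpr ⟨hne, ENNReal.ofReal_ne_top⟩) (top_le_iff.mp hint)
    · right
      have hVx' : ∫⁻ z, ENNReal.ofReal (‖G1 x z - g x‖ ^ 2) ∂μ₀ ≠ ⊤ := by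
        simp only [hVdef] at hVx; exact hVx
      have hNint2 : Integrable (fun z => ‖G1 x z - g x‖ ^ 2) μ₀ :=
        sq_integrable_of_lintegral_ne_top (hNmeas.norm.pow_const 2)
          (fun z => by positivity) hVx'
      have hVeq : V x = ENNReal.ofReal (∫ z, ‖G1 x z - g x‖ ^ 2 ∂μ₀) := by
        simp only [hVdef]
        exact (ofReal_integral_eq_lintegral_ofReal hNint2
          (Filter.Eventually.of_forall fun z => sq_nonneg _)).symm
      have hVle : V x ≤ ENNReal.ofReal (σ ^ 2) := by
        rw [hVeq]; exact ENNReal.ofReal_le_ofReal (hGvar x)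
      have hNmem : MemLp (fun z => G1 x z - g x) 2 μ₀ := by
        rw [memLp_two_iff_integrable_sq_norm hNmeas.aestronglyMeasurable]
        exact hNint2
      have hNint : Integrable (fun z => G1 x z - g x) μ₀ := hNmem.integrable one_le_two
      have hGint : Integrable (fun z => G1 x z) μ₀ := by
        have h : (fun z => G1 x z) = fun z => (G1 x z - g x) + g x := by
          funext z; abel
        rw [h]; exact hNint.add (integrable_const _)
      have hNmean : ∫ z, (G1 x z - g x) ∂μ₀ = 0 := by
        rw [integral_sub hGint (integrable_const _), hGmean, integral_const]
        simp
      have hms := moment_split μ₀ _ hNmeas hNmean (w x) ηc hVx'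
      have hceq : cnd x = ENNReal.ofReal (‖w x‖ ^ 2) + ENNReal.ofReal (ηc ^ 2) * V x := by
        rw [hcndrw, hms]
        simp only [hVdef]
      refine ⟨by rw [hceq]; exact le_self_add, ?_⟩
      rw [hceq, ENNReal.ofReal_add (by positivity) (by positivity),
        ENNReal.ofReal_mul (sq_nonneg ηc)]
      exact add_le_add_right (mul_le_mul_right hVle _) _
  -- one-step recursion (upper) with escape to infinity
  haveI hpiprob : IsProbabilityMeasure (Measure.pi fun _ : ι => μ₀) := by infer_instance
  have hrec : ∀ k, k < K →
      EE (k + 1) ≤ ENNReal.ofReal ρ * EE k + ENNReal.ofReal Ci ∨ EE (k + 1) = ⊤ := by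
    intro k hk
    have hSmeas : MeasurableSet {ω : ι → Ω₀ | cnd (X k ω) = ⊤} :=
      (hcndmeas.comp (hXmeas k hk.le)) (measurableSet_singleton ⊤)
    by_cases hS : (Measure.pi fun _ : ι => μ₀) {ω : ι → Ω₀ | cnd (X k ω) = ⊤} = 0
    · left
      rw [hEkey k hk]
      have hae : ∀ᵐ ω ∂(Measure.pi fun _ : ι => μ₀),
          cnd (X k ω) ≤ ENNReal.ofReal (ρ * ‖X k ω - xbar‖ ^ 2 + Ci) := by
        rw [ae_iff]
        refine measure_mono_null ?_ hS
        intro ω hω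
        simp only [Set.mem_setOf_eq] at hω ⊢
        rcases hdich (X k ω) with h | ⟨_, h2⟩
        · exact h
        · exfalso
          apply hω
          refine h2.trans (ENNReal.ofReal_le_ofReal ?_)
          have h3 := hwup (X k ω)
          rw [hCidef]
          linarith
      calc ∫⁻ ω, cnd (X k ω) ∂(Measure.pi fun _ : ι => μ₀)
          ≤ ∫⁻ ω, ENNReal.ofReal (ρ * ‖X k ω - xbar‖ ^ 2 + Ci)
              ∂(Measure.pi fun _ : ι => μ₀) := lintegral_mono_ae hae
        _ = ENNReal.ofReal ρ * EE k + ENNReal.ofReal Ci := by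
            have h1 : ∀ ω : ι → Ω₀, ENNReal.ofReal (ρ * ‖X k ω - xbar‖ ^ 2 + Ci)
                = ENNReal.ofReal ρ * ENNReal.ofReal (‖X k ω - xbar‖ ^ 2)
                  + ENNReal.ofReal Ci := by
              intro ω
              rw [ENNReal.ofReal_add (by positivity) hCi0, ENNReal.ofReal_mul hρ0]
            rw [lintegral_congr h1, lintegral_add_right _ measurable_const,
              lintegral_const_mul _ (hXnmeas k hk.le), lintegral_const, measure_univ, mul_one]
            simp only [hEEdef]
    · right
      rw [hEkey k hk, ← top_le_iff]
      calc (⊤ : ℝ≥0∞) = ⊤ * (Measure.pi fun _ : ι => μ₀) {ω | cnd (X k ω) = ⊤} := by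
            rw [ENNReal.top_mul hS]
        _ = ∫⁻ _ω in {ω | cnd (X k ω) = ⊤}, ⊤ ∂(Measure.pi fun _ : ι => μ₀) := by
            rw [setLIntegral_const]
        _ ≤ ∫⁻ ω in {ω | cnd (X k ω) = ⊤}, cnd (X k ω) ∂(Measure.pi fun _ : ι => μ₀) := by
            refine setLIntegral_mono' hSmeas fun ω hω => ?_
            simp only [Set.mem_setOf_eq] at hω
            rw [hω]
        _ ≤ ∫⁻ ω, cnd (X k ω) ∂(Measure.pi fun _ : ι => μ₀) :=
            lintegral_mono' Measure.restrict_le_self le_rfl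
  -- propagation of infinity
  have hprop : ∀ k, k < K → EE k = ⊤ → EE (k + 1) = ⊤ := by
    intro k hk htop
    have hpw2 : ∀ ω : ι → Ω₀, ENNReal.ofReal (‖X k ω - xbar‖ ^ 2 / 4)
        ≤ cnd (X k ω) + ENNReal.ofReal (ηc ^ 2 * A ^ 2) := by
      intro ω
      rcases hdich (X k ω) with h | ⟨h1, _⟩
      · simp [h]
      · calc ENNReal.ofReal (‖X k ω - xbar‖ ^ 2 / 4)
            ≤ ENNReal.ofReal (‖w (X k ω)‖ ^ 2 + ηc ^ 2 * A ^ 2) :=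
              ENNReal.ofReal_le_ofReal (hwlo (X k ω))
          _ ≤ ENNReal.ofReal (‖w (X k ω)‖ ^ 2) + ENNReal.ofReal (ηc ^ 2 * A ^ 2) :=
              ENNReal.ofReal_add_le
          _ ≤ cnd (X k ω) + ENNReal.ofReal (ηc ^ 2 * A ^ 2) := add_le_add_left h1 _
    have hmono := lintegral_mono (μ := Measure.pi fun _ : ι => μ₀) hpw2
    rw [lintegral_add_right _ measurable_const, lintegral_const, measure_univ, mul_one,
      ← hEkey k hk] at hmono
    have hlhs : ∫⁻ ω, ENNReal.ofReal (‖X k ω - xbar‖ ^ 2 / 4) ∂(Measure.pi fun _ : ι => μ₀)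
        = ENNReal.ofReal (1 / 4) * EE k := by
      simp only [hEEdef]
      rw [← lintegral_const_mul _ (hXnmeas k hk.le)]
      refine lintegral_congr fun ω => ?_
      rw [← ENNReal.ofReal_mul (by norm_num)]
      congr 1
      ring
    rw [hlhs, htop, ENNReal.mul_top (ne_of_gt (ENNReal.ofReal_pos.mpr (by norm_num)))] at hmono
    by_contra hne
    exact (ENNReal.add_ne_top.mpr ⟨hne, ENNReal.ofReal_ne_top⟩) (top_le_iff.mp hmono)
  -- base case
  have hbase : EE 0 = ENNReal.ofReal (‖x0 - xbar‖ ^ 2) := by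
    simp only [hEEdef]
    have h : ∀ ω : ι → Ω₀, ENNReal.ofReal (‖X 0 ω - xbar‖ ^ 2)
        = ENNReal.ofReal (‖x0 - xbar‖ ^ 2) := fun ω => by rw [hX0]
    rw [lintegral_congr h, lintegral_const, measure_univ, mul_one]
  -- induction
  have hind : ∀ k, k ≤ K → EE k ≤ ENNReal.ofReal (ρ ^ k * ‖x0 - xbar‖ ^ 2
      + (∑ j ∈ Finset.range k, ρ ^ j) * Ci) ∨ EE k = ⊤ := by
    intro k
    induction k with
    | zero =>
      intro _
      left
      rw [hbase]
      apply ENNReal.ofReal_le_ofReal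
      simp
    | succ k ih =>
      intro hk
      have hkK : k < K := hk
      rcases ih hkK.le with hle | htop
      · rcases hrec k hkK with hrle | hrtop
        · left
          refine hrle.trans ?_
          have h1 : ENNReal.ofReal ρ * EE k + ENNReal.ofReal Ci
              ≤ ENNReal.ofReal ρ * ENNReal.ofReal (ρ ^ k * ‖x0 - xbar‖ ^ 2
                + (∑ j ∈ Finset.range k, ρ ^ j) * Ci) + ENNReal.ofReal Ci :=
            add_le_add_left (mul_le_mul_right hle _) _
          refine h1.trans ?_
          rw [← ENNReal.ofReal_mul hρ0, ← ENNReal.ofReal_add (by positivity) hCi0]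
          apply ENNReal.ofReal_le_ofReal
          have hgeom : (∑ j ∈ Finset.range (k + 1), ρ ^ j)
              = ρ * (∑ j ∈ Finset.range k, ρ ^ j) + 1 := geom_sum_succ
          rw [hgeom]
          exact le_of_eq (by ring)
        · right; exact hrtop
      · right; exact hprop k hkK htop
  have hbnd0 : ∀ k, 0 ≤ ρ ^ k * ‖x0 - xbar‖ ^ 2 + (∑ j ∈ Finset.range k, ρ ^ j) * Ci := by
    intro k
    have h1 : 0 ≤ ∑ j ∈ Finset.range k, ρ ^ j :=
      Finset.sum_nonneg fun j _ => pow_nonneg hρ0 j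
    exact add_nonneg (mul_nonneg (pow_nonneg hρ0 k) (by positivity)) (mul_nonneg h1 hCi0)
  -- real bound for each k
  have hTk : ∀ k, k ≤ K → ∫ ω, ‖X k ω - xbar‖ ^ 2 ∂(Measure.pi fun _ : ι => μ₀)
      ≤ ρ ^ k * ‖x0 - xbar‖ ^ 2 + (∑ j ∈ Finset.range k, ρ ^ j) * Ci := by
    intro k hk
    have hsm : AEStronglyMeasurable (fun ω : ι → Ω₀ => ‖X k ω - xbar‖ ^ 2)
        (Measure.pi fun _ : ι => μ₀) :=
      (((hXmeas k hk).sub measurable_const).norm.pow_const 2).aestronglyMeasurable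
    rw [integral_eq_lintegral_of_nonneg_ae
      (Filter.Eventually.of_forall fun ω => by positivity) hsm]
    rcases hind k hk with hle | htop
    · simp only [hEEdef] at hle
      exact ENNReal.toReal_le_of_le_ofReal (hbnd0 k) hle
    · simp only [hEEdef] at htop
      rw [htop]
      simpa using hbnd0 k
  -- sum the bounds
  have hsum : ∑ k ∈ Finset.range K,
      (ρ ^ k * ‖x0 - xbar‖ ^ 2 + (∑ j ∈ Finset.range k, ρ ^ j) * Ci)
      ≤ 3 * Kr * ‖x0 - xbar‖ ^ 2 + (3 / 2) * Kr ^ 2 * Ci := by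
    have h2 : ∑ k ∈ Finset.range K, ρ ^ k ≤ 3 * Kr := by
      calc ∑ k ∈ Finset.range K, ρ ^ k ≤ ∑ _k ∈ Finset.range K, (3 : ℝ) :=
            Finset.sum_le_sum fun k hk => hρpow k (by
              have := Finset.mem_range.mp hk; omega)
        _ = 3 * Kr := by
            rw [Finset.sum_const, Finset.card_range, hKrdef]
            simp [mul_comm]
    have h1 : ∑ k ∈ Finset.range K, ρ ^ k * ‖x0 - xbar‖ ^ 2
        ≤ 3 * Kr * ‖x0 - xbar‖ ^ 2 := by
      rw [← Finset.sum_mul]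
      exact mul_le_mul_of_nonneg_right h2 (by positivity)
    have h3 : ∑ k ∈ Finset.range K, (∑ j ∈ Finset.range k, ρ ^ j) * Ci
        ≤ (3 / 2) * Kr ^ 2 * Ci := by
      have h4 : ∀ k ∈ Finset.range K, (∑ j ∈ Finset.range k, ρ ^ j) * Ci
          ≤ (3 * (k : ℝ)) * Ci := by
        intro k hk
        have h5 : ∑ j ∈ Finset.range k, ρ ^ j ≤ 3 * (k : ℝ) := by
          calc ∑ j ∈ Finset.range k, ρ ^ j ≤ ∑ _j ∈ Finset.range k, (3 : ℝ) :=
                Finset.sum_le_sum fun j hj => hρpow j (by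
                  have hj' := Finset.mem_range.mp hj
                  have hk' := Finset.mem_range.mp hk
                  omega)
            _ = 3 * (k : ℝ) := by
                rw [Finset.sum_const, Finset.card_range]
                simp [mul_comm]
        exact mul_le_mul_of_nonneg_right h5 hCi0
      have hgauss : (∑ k ∈ Finset.range K, (k : ℝ)) * 2 = Kr * (Kr - 1) := by
        have hg := Finset.sum_range_id_mul_two K
        have h7 := congrArg (fun m : ℕ => (m : ℝ)) hg
        push_cast [Nat.cast_sub hK] at h7
        rw [hKrdef]
        exact h7
      calc ∑ k ∈ Finset.range K, (∑ j ∈ Finset.range k, ρ ^ j) * Ci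
          ≤ ∑ k ∈ Finset.range K, (3 * (k : ℝ)) * Ci := Finset.sum_le_sum h4
        _ = 3 * (∑ k ∈ Finset.range K, (k : ℝ)) * Ci := by
            rw [← Finset.sum_mul, Finset.mul_sum]
        _ ≤ (3 / 2) * Kr ^ 2 * Ci := by nlinarith [hCi0, hKr0, hgauss]
    calc ∑ k ∈ Finset.range K,
        (ρ ^ k * ‖x0 - xbar‖ ^ 2 + (∑ j ∈ Finset.range k, ρ ^ j) * Ci)
        = (∑ k ∈ Finset.range K, ρ ^ k * ‖x0 - xbar‖ ^ 2)
          + ∑ k ∈ Finset.range K, (∑ j ∈ Finset.range k, ρ ^ j) * Ci :=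
          Finset.sum_add_distrib
      _ ≤ 3 * Kr * ‖x0 - xbar‖ ^ 2 + (3 / 2) * Kr ^ 2 * Ci := add_le_add h1 h3
  -- conclude
  calc ∑ k ∈ Finset.range K, ∫ ω, ‖X k ω - xbar‖ ^ 2 ∂(Measure.pi fun _ : ι => μ₀)
      ≤ ∑ k ∈ Finset.range K,
        (ρ ^ k * ‖x0 - xbar‖ ^ 2 + (∑ j ∈ Finset.range k, ρ ^ j) * Ci) :=
        Finset.sum_le_sum fun k hk => hTk k (by
          have := Finset.mem_range.mp hk; omega)
    _ ≤ 3 * Kr * ‖x0 - xbar‖ ^ 2 + (3 / 2) * Kr ^ 2 * Ci := hsum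
    _ ≤ 3 * K * ‖x0 - xbar‖ ^ 2 + 3 * K ^ 3 * ηc ^ 2 * ‖cc + g xbar‖ ^ 2
        + (3 / 2) * K ^ 2 * ηc ^ 2 * σ ^ 2 := by
        rw [← hKrdef, ← hAdef, hCidef]
        exact le_of_eq (by ring)
/-- **Lemma (bounding the client drift).** If the local stepsize satisfies
`η_c ≤ 1/(8KL)`, then the accumulated client drift of one K-GT round satisfies
`Ɛ_t ≤ 3KΞ_t + 12K³η_c²L²γ_t + 6K³η_c²‖∇f(x̄)‖² + 3K²η_c²σ²`. -/
theorem client_drift_bound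
    (d n K : ℕ) (hn : 0 < n) (hK : 0 < K)
    (L σ : ℝ) (hL : 0 < L) (hσ : 0 ≤ σ)
    (ηc : ℝ) (hηc : 0 < ηc)
    (Ω₀ : Type) [MeasurableSpace Ω₀] (μ₀ : MeasureTheory.Measure Ω₀)
    [MeasureTheory.IsProbabilityMeasure μ₀]
    (f : Fin n → EuclideanSpace ℝ (Fin d) → ℝ)
    (fgrad : Fin n → EuclideanSpace ℝ (Fin d) → EuclideanSpace ℝ (Fin d))
    (hgrad : ∀ i x, HasGradientAt (f i) (fgrad i x) x)
    (hlip : ∀ i x y, ‖fgrad i x - fgrad i y‖ ≤ L * ‖x - y‖)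
    (G : Fin n → EuclideanSpace ℝ (Fin d) → Ω₀ → EuclideanSpace ℝ (Fin d))
    (hGmeas : ∀ i, Measurable (Function.uncurry (G i)))
    (hGmean : ∀ i x, ∫ ω, G i x ω ∂μ₀ = fgrad i x)
    (hGvar : ∀ i x, ∫ ω, ‖G i x ω - fgrad i x‖ ^ 2 ∂μ₀ ≤ σ ^ 2)
    (x0 c : Fin n → EuclideanSpace ℝ (Fin d))
    (hczero : ∑ i, c i = 0)
    (μ : MeasureTheory.Measure ((Fin n × Fin K) → Ω₀))
    (hμ : μ = MeasureTheory.Measure.pi fun _ => μ₀)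
    (xloc : ℕ → Fin n → ((Fin n × Fin K) → Ω₀) → EuclideanSpace ℝ (Fin d))
    (hxloc0 : ∀ i ω, xloc 0 i ω = x0 i)
    (hxlocstep : ∀ (k : Fin K) i ω,
      xloc ((k : ℕ) + 1) i ω =
        xloc (k : ℕ) i ω - ηc • (G i (xloc (k : ℕ) i ω) (ω (i, k)) + c i))
    (xbar : EuclideanSpace ℝ (Fin d)) (hxbar : xbar = (n : ℝ)⁻¹ • ∑ i, x0 i)
    (gradF : EuclideanSpace ℝ (Fin d) → EuclideanSpace ℝ (Fin d))
    (hgradF : ∀ y, gradF y = (n : ℝ)⁻¹ • ∑ i, fgrad i y)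
    (Ξ : ℝ) (hΞ : Ξ = (n : ℝ)⁻¹ * ∑ i, ‖x0 i - xbar‖ ^ 2)
    (γ : ℝ) (hγ : γ = (n : ℝ)⁻¹ * (L ^ 2)⁻¹ * ∑ i, ‖c i + fgrad i xbar - gradF xbar‖ ^ 2)
    (e : ℕ → ℝ) (he : ∀ k, e k = (n : ℝ)⁻¹ * ∑ i, ∫ ω, ‖xloc k i ω - xbar‖ ^ 2 ∂μ)
    (Edrift : ℝ) (hEdrift : Edrift = ∑ k ∈ Finset.range K, e k)
    (hstep : ηc ≤ 1 / (8 * K * L)) :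
    Edrift ≤ 3 * K * Ξ + 12 * K ^ 3 * ηc ^ 2 * L ^ 2 * γ
      + 6 * K ^ 3 * ηc ^ 2 * ‖gradF xbar‖ ^ 2 + 3 * K ^ 2 * ηc ^ 2 * σ ^ 2 := by
  subst hμ
  have hn0 : (0 : ℝ) < (n : ℝ) := by exact_mod_cast hn
  have hΞ0 : 0 ≤ Ξ := by
    rw [hΞ]
    have : 0 ≤ ∑ i, ‖x0 i - xbar‖ ^ 2 := Finset.sum_nonneg fun i _ => by positivity
    positivity
  have hγ0 : 0 ≤ γ := by
    rw [hγ]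
    have : 0 ≤ ∑ i, ‖c i + fgrad i xbar - gradF xbar‖ ^ 2 :=
      Finset.sum_nonneg fun i _ => by positivity
    positivity
  by_cases hK1 : K = 1
  · -- trivial case K = 1
    subst hK1
    have he0 : e 0 = Ξ := by
      rw [he 0, hΞ]
      congr 1
      refine Finset.sum_congr rfl fun i _ => ?_
      have hconst : ∀ ω : Fin n × Fin 1 → Ω₀, ‖xloc 0 i ω - xbar‖ ^ 2
          = ‖x0 i - xbar‖ ^ 2 := fun ω => by rw [hxloc0]
      rw [integral_congr_ae (Filter.Eventually.of_forall hconst), integral_const,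
        probReal_univ]
      simp
    rw [hEdrift, Finset.sum_range_one, he0]
    have h1 : 0 ≤ ηc ^ 2 * L ^ 2 * γ := by positivity
    have h2 : 0 ≤ ηc ^ 2 * ‖gradF xbar‖ ^ 2 := by positivity
    have h3 : 0 ≤ ηc ^ 2 * σ ^ 2 := by positivity
    push_cast
    nlinarith
  · have hK2 : 2 ≤ K := by omega
    -- per-node bound
    have hnode : ∀ i : Fin n,
        ∑ k ∈ Finset.range K, ∫ ω, ‖xloc k i ω - xbar‖ ^ 2
            ∂(MeasureTheory.Measure.pi fun _ : Fin n × Fin K => μ₀)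
        ≤ 3 * K * ‖x0 i - xbar‖ ^ 2 + 3 * K ^ 3 * ηc ^ 2 * ‖c i + fgrad i xbar‖ ^ 2
          + (3 / 2) * K ^ 2 * ηc ^ 2 * σ ^ 2 := by
      intro i
      refine node_bound μ₀ K hK2 (fun k => (i, k)) (fun a b hab => congrArg Prod.snd hab)
        L σ ηc hL hσ hηc (fgrad i) (hlip i) (G i) (hGmeas i) (hGmean i) (hGvar i)
        (c i) (x0 i) xbar (fun k ω => xloc k i ω) (fun ω => hxloc0 i ω)
        (fun k ω => hxlocstep k i ω) ?_
      exact hstep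
    -- assemble
    have hE2 : Edrift = (n : ℝ)⁻¹ * ∑ i : Fin n, ∑ k ∈ Finset.range K,
        ∫ ω, ‖xloc k i ω - xbar‖ ^ 2
          ∂(MeasureTheory.Measure.pi fun _ : Fin n × Fin K => μ₀) := by
      rw [hEdrift]
      simp_rw [he]
      rw [← Finset.mul_sum, Finset.sum_comm]
    have hsum1 : ∑ i : Fin n, ∑ k ∈ Finset.range K,
        ∫ ω, ‖xloc k i ω - xbar‖ ^ 2
          ∂(MeasureTheory.Measure.pi fun _ : Fin n × Fin K => μ₀)
        ≤ ∑ i : Fin n, (3 * K * ‖x0 i - xbar‖ ^ 2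
          + 3 * K ^ 3 * ηc ^ 2 * ‖c i + fgrad i xbar‖ ^ 2
          + (3 / 2) * K ^ 2 * ηc ^ 2 * σ ^ 2) :=
      Finset.sum_le_sum fun i _ => hnode i
    have hsplit : ∑ i : Fin n, (3 * K * ‖x0 i - xbar‖ ^ 2
          + 3 * K ^ 3 * ηc ^ 2 * ‖c i + fgrad i xbar‖ ^ 2
          + (3 / 2) * K ^ 2 * ηc ^ 2 * σ ^ 2)
        = 3 * K * (∑ i : Fin n, ‖x0 i - xbar‖ ^ 2)
          + 3 * K ^ 3 * ηc ^ 2 * (∑ i : Fin n, ‖c i + fgrad i xbar‖ ^ 2)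
          + (n : ℝ) * ((3 / 2) * K ^ 2 * ηc ^ 2 * σ ^ 2) := by
      rw [Finset.sum_add_distrib, Finset.sum_add_distrib, ← Finset.mul_sum, ← Finset.mul_sum,
        Finset.sum_const, Finset.card_univ, Fintype.card_fin]
      simp [nsmul_eq_mul]
    have hS1 : ∑ i : Fin n, ‖x0 i - xbar‖ ^ 2 = (n : ℝ) * Ξ := by
      rw [hΞ, ← mul_assoc, mul_inv_cancel₀ hn0.ne', one_mul]
    have hS3 : ∑ i : Fin n, ‖c i + fgrad i xbar - gradF xbar‖ ^ 2 = (n : ℝ) * L ^ 2 * γ := by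
      rw [hγ]
      field_simp
    have hAi : ∀ i : Fin n, ‖c i + fgrad i xbar‖ ^ 2
        ≤ 2 * ‖c i + fgrad i xbar - gradF xbar‖ ^ 2 + 2 * ‖gradF xbar‖ ^ 2 := by
      intro i
      have h2 : ‖c i + fgrad i xbar‖ = ‖(c i + fgrad i xbar - gradF xbar) + gradF xbar‖ := by
        congr 1
        abel
      have h1 : ‖c i + fgrad i xbar‖ ≤ ‖c i + fgrad i xbar - gradF xbar‖ + ‖gradF xbar‖ := by
        rw [h2]
        exact norm_add_le _ _
      nlinarith [norm_nonneg (c i + fgrad i xbar),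
        norm_nonneg (c i + fgrad i xbar - gradF xbar), norm_nonneg (gradF xbar),
        sq_nonneg (‖c i + fgrad i xbar - gradF xbar‖ - ‖gradF xbar‖)]
    have hS2 : ∑ i : Fin n, ‖c i + fgrad i xbar‖ ^ 2
        ≤ 2 * ((n : ℝ) * L ^ 2 * γ) + 2 * (n : ℝ) * ‖gradF xbar‖ ^ 2 := by
      calc ∑ i : Fin n, ‖c i + fgrad i xbar‖ ^ 2
          ≤ ∑ i : Fin n, (2 * ‖c i + fgrad i xbar - gradF xbar‖ ^ 2
              + 2 * ‖gradF xbar‖ ^ 2) := Finset.sum_le_sum fun i _ => hAi i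
        _ = 2 * ((n : ℝ) * L ^ 2 * γ) + 2 * (n : ℝ) * ‖gradF xbar‖ ^ 2 := by
            rw [Finset.sum_add_distrib, ← Finset.mul_sum, hS3, Finset.sum_const,
              Finset.card_univ, Fintype.card_fin]
            simp [nsmul_eq_mul]
            ring
    -- final chain
    rw [hE2]
    have hstep2 : (n : ℝ)⁻¹ * ∑ i : Fin n, ∑ k ∈ Finset.range K,
        ∫ ω, ‖xloc k i ω - xbar‖ ^ 2
          ∂(MeasureTheory.Measure.pi fun _ : Fin n × Fin K => μ₀)
        ≤ (n : ℝ)⁻¹ * (3 * K * ((n : ℝ) * Ξ)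
          + 3 * K ^ 3 * ηc ^ 2 * (2 * ((n : ℝ) * L ^ 2 * γ) + 2 * (n : ℝ) * ‖gradF xbar‖ ^ 2)
          + (n : ℝ) * ((3 / 2) * K ^ 2 * ηc ^ 2 * σ ^ 2)) := by
      apply mul_le_mul_of_nonneg_left _ (by positivity)
      refine hsum1.trans ?_
      rw [hsplit, hS1]
      have h8 : 3 * (K : ℝ) ^ 3 * ηc ^ 2 * (∑ i : Fin n, ‖c i + fgrad i xbar‖ ^ 2)
          ≤ 3 * (K : ℝ) ^ 3 * ηc ^ 2
            * (2 * ((n : ℝ) * L ^ 2 * γ) + 2 * (n : ℝ) * ‖gradF xbar‖ ^ 2) :=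
        mul_le_mul_of_nonneg_left hS2 (by positivity)
      linarith
    refine hstep2.trans ?_
    have hexp : (n : ℝ)⁻¹ * (3 * K * ((n : ℝ) * Ξ)
          + 3 * K ^ 3 * ηc ^ 2 * (2 * ((n : ℝ) * L ^ 2 * γ) + 2 * (n : ℝ) * ‖gradF xbar‖ ^ 2)
          + (n : ℝ) * ((3 / 2) * K ^ 2 * ηc ^ 2 * σ ^ 2))
        = 3 * K * Ξ + 6 * K ^ 3 * ηc ^ 2 * L ^ 2 * γ + 6 * K ^ 3 * ηc ^ 2 * ‖gradF xbar‖ ^ 2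
          + (3 / 2) * K ^ 2 * ηc ^ 2 * σ ^ 2 := by
      field_simp
      ring
    rw [hexp]
    have h1 : 0 ≤ (K : ℝ) ^ 3 * ηc ^ 2 * L ^ 2 * γ := by positivity
    have h2 : 0 ≤ (K : ℝ) ^ 2 * ηc ^ 2 * σ ^ 2 := by positivity
    nlinarith
end
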